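/- Let $\mathcal{J} \subseteq \mathbb{R}$ be an interval and let $p : \mathcal{J} \to \mathbb{R}$ be twice differentiable with $0 \le p(t) \le \bar p < 1$, $|p'(t)| \le L_1$ and $|p''(t)| \le L_2$ for all $t \in \mathcal{J}$. Set $M = \{L_2 + L_1^2/(1-\bar p)\}/(1 - \bar p)$. Let $x_1, \dots, x_\nu \in \mathcal{J}$ with mean $\bar x = \nu^{-1}\sum_i x_i$ and $\max_i |x_i - \bar x| \le D$. Then $\Big| \prod_{i=1}^{\nu} \{1 - p(x_i)\} - \{1 - p(\bar x)\}^{\nu} \Big| \le \{1 - p(\bar x)\}^{\nu} \big( e^{\nu M D^2 / 2} - 1 \big)$. -/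

import Mathlib

open Finset

open intervalIntegral MeasureTheory
/-- Quadratic Taylor bound on a convex subset of ℝ. -/
lemma quad_taylor_aux {J : Set ℝ} (hJ : Convex ℝ J) {f f' f'' : ℝ → ℝ}
    (hf' : ∀ t ∈ J, HasDerivWithinAt f (f' t) J t)
    (hf'' : ∀ t ∈ J, HasDerivWithinAt f' (f'' t) J t)
    {C : ℝ} (hC : ∀ t ∈ J, |f'' t| ≤ C)
    {a b : ℝ} (ha : a ∈ J) (hb : b ∈ J) :
    |f b - f a - f' a * (b - a)| ≤ C / 2 * (b - a) ^ 2 := by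
  have hC0 : 0 ≤ C := le_trans (abs_nonneg _) (hC a ha)
  have hlip : ∀ s ∈ J, ∀ t ∈ J, |f' s - f' t| ≤ C * |s - t| := by
    intro s hs t ht
    exact hJ.norm_image_sub_le_of_norm_hasDerivWithin_le hf''
      (fun u hu => hC u hu) ht hs
  -- FTC on ordered pairs in J
  have ftc : ∀ u ∈ J, ∀ v ∈ J, u ≤ v → ∫ t in u..v, f' t = f v - f u := by
    intro u hu v hv huv
    have hIcc : Set.Icc u v ⊆ J := hJ.ordConnected.out hu hv
    have hcontf' : ContinuousOn f' (Set.Icc u v) := fun t ht =>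
      ((hf'' t (hIcc ht)).continuousWithinAt).mono hIcc
    refine integral_eq_sub_of_hasDeriv_right_of_le huv
      (fun t ht => ((hf' t (hIcc ht)).continuousWithinAt).mono hIcc) ?_ ?_
    · intro t ht
      have hmem : Set.Icc u v ∈ nhds t := Icc_mem_nhds ht.1 ht.2
      exact (((hf' t (hIcc (Set.Ioo_subset_Icc_self ht))).mono hIcc).hasDerivAt
        hmem).hasDerivWithinAt
    · exact (hcontf'.mono (by rw [Set.uIcc_of_le huv])).intervalIntegrable
  have hftc : ∫ t in a..b, f' t = f b - f a := by
    rcases le_total a b with h | h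
    · exact ftc a ha b hb h
    · rw [intervalIntegral.integral_symm, ftc b hb a ha h]; ring
  have hJuIcc : Set.uIcc a b ⊆ J := by
    rcases le_total a b with h | h
    · rw [Set.uIcc_of_le h]; exact hJ.ordConnected.out ha hb
    · rw [Set.uIcc_of_ge h]; exact hJ.ordConnected.out hb ha
  have hcontf' : ContinuousOn f' (Set.uIcc a b) := fun t ht =>
    ((hf'' t (hJuIcc ht)).continuousWithinAt).mono hJuIcc
  have hint1 : IntervalIntegrable f' MeasureTheory.volume a b := hcontf'.intervalIntegrable
  have hint2 : IntervalIntegrable (fun _ => f' a) MeasureTheory.volume a b :=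
    intervalIntegrable_const
  have key : f b - f a - f' a * (b - a) = ∫ t in a..b, (f' t - f' a) := by
    rw [intervalIntegral.integral_sub hint1 hint2, hftc, intervalIntegral.integral_const]
    simp [smul_eq_mul]; ring
  rw [key, ← Real.norm_eq_abs]
  have hbound : ‖∫ t in a..b, (f' t - f' a)‖ ≤ |∫ t in a..b, C * abs (t - a)| := by
    apply intervalIntegral.norm_integral_le_abs_of_norm_le
    · filter_upwards [MeasureTheory.ae_restrict_mem measurableSet_uIoc] with t ht
      have htJ : t ∈ J := hJuIcc (Set.Ioc_subset_Icc_self ht)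
      simpa [Real.norm_eq_abs] using hlip t htJ a ha
    · exact ((continuous_const.mul ((continuous_id.sub continuous_const).abs)).continuousOn :
        ContinuousOn (fun t => C * |t - a|) (Set.uIcc a b)).intervalIntegrable
  refine hbound.trans ?_
  have : ∫ t in a..b, C * abs (t - a) = C * ∫ t in a..b, abs (t - a) := by
    rw [intervalIntegral.integral_const_mul]
  rw [this]
  have habs : |∫ t in a..b, abs (t - a)| = (b - a) ^ 2 / 2 := by
    have := intervalIntegral.integral_comp_sub_right (fun s => |s|) a (a := a) (b := b)
    rw [this, sub_self]
    rcases le_total 0 (b - a) with h | h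
    · rw [abs_of_nonneg]
      · have : ∫ s in (0:ℝ)..(b-a), |s| = ∫ s in (0:ℝ)..(b-a), s := by
          apply intervalIntegral.integral_congr
          intro s hs
          rw [Set.uIcc_of_le h] at hs
          exact abs_of_nonneg hs.1
        rw [this, integral_id]; ring
      · apply intervalIntegral.integral_nonneg h
        intro u _; exact abs_nonneg _
    · have : ∫ s in (0:ℝ)..(b-a), |s| = ∫ s in (0:ℝ)..(b-a), -s := by
        apply intervalIntegral.integral_congr
        intro s hs
        rw [Set.uIcc_of_ge h] at hs
        exact abs_of_nonpos hs.2
      rw [this]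
      rw [intervalIntegral.integral_neg]
      simp [integral_id]
      positivity
  rw [abs_mul, abs_of_nonneg hC0, habs]
  exact le_of_eq (by ring)

lemma abs_exp_sub_one_le' (u : ℝ) : |Real.exp u - 1| ≤ Real.exp |u| - 1 := by
  rcases le_total 0 u with h | h
  · rw [abs_of_nonneg h, abs_of_nonneg (by linarith [Real.one_le_exp h])]
  · rw [abs_of_nonpos h, abs_of_nonpos (by linarith [Real.exp_le_one_iff.mpr h] : Real.exp u - 1 ≤ 0)]
    have := Real.one_le_cosh u
    rw [Real.cosh_eq] at this
    linarith

/-- Quantitative comparison of the probability that a homogeneous pool tests negative,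
`∏ᵢ (1 - p(xᵢ))`, with `(1 - p(x̄))^ν`, for a twice differentiable contamination
probability `p` bounded away from one. -/
theorem pool_negativity_product_close_to_power_at_mean
    {J : Set ℝ} (hJconv : Convex ℝ J)
    (p p' p'' : ℝ → ℝ) (pbar L1 L2 M : ℝ)
    (hpbar : pbar < 1)
    (hp01 : ∀ t ∈ J, 0 ≤ p t ∧ p t ≤ pbar)
    (hp' : ∀ t ∈ J, HasDerivWithinAt p (p' t) J t)
    (hp'' : ∀ t ∈ J, HasDerivWithinAt p' (p'' t) J t)
    (hL1 : ∀ t ∈ J, |p' t| ≤ L1) (hL2 : ∀ t ∈ J, |p'' t| ≤ L2)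
    (hM : M = (L2 + L1 ^ 2 / (1 - pbar)) / (1 - pbar))
    {ν : ℕ} (hν : 1 ≤ ν) (x : Fin ν → ℝ) (hx : ∀ i, x i ∈ J)
    (xbar : ℝ) (hxbar : xbar = (∑ i, x i) / ν) (hxbarJ : xbar ∈ J)
    (D : ℝ) (hD : ∀ i, |x i - xbar| ≤ D) :
    |(∏ i, (1 - p (x i))) - (1 - p xbar) ^ ν| ≤
      (1 - p xbar) ^ ν * (Real.exp (ν * M * D ^ 2 / 2) - 1) := by
  have hq : ∀ t ∈ J, 0 < 1 - p t := fun t ht => by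
    have := (hp01 t ht).2; linarith
  have hb0 : (0:ℝ) < 1 - pbar := by linarith
  have hqlb : ∀ t ∈ J, 1 - pbar ≤ 1 - p t := fun t ht => by
    have := (hp01 t ht).2; linarith
  have hL10 : 0 ≤ L1 := le_trans (abs_nonneg _) (hL1 xbar hxbarJ)
  have hL20 : 0 ≤ L2 := le_trans (abs_nonneg _) (hL2 xbar hxbarJ)
  -- log derivatives
  set f : ℝ → ℝ := fun t => Real.log (1 - p t) with hf
  set f' : ℝ → ℝ := fun t => -p' t / (1 - p t) with hf'def
  set f'' : ℝ → ℝ := fun t => (-p'' t * (1 - p t) - -p' t * -p' t) / (1 - p t) ^ 2 with hf''def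
  have hq' : ∀ t ∈ J, HasDerivWithinAt (fun s => 1 - p s) (-p' t) J t := fun t ht => by
    simpa using (hp' t ht).const_sub 1
  have hder1 : ∀ t ∈ J, HasDerivWithinAt f (f' t) J t := fun t ht =>
    (hq' t ht).log (ne_of_gt (hq t ht))
  have hder2 : ∀ t ∈ J, HasDerivWithinAt f' (f'' t) J t := fun t ht =>
    ((hp'' t ht).neg).div (hq' t ht) (ne_of_gt (hq t ht))
  have hMbound : ∀ t ∈ J, |f'' t| ≤ M := by
    intro t ht
    have hc := hq t ht
    have hclb := hqlb t ht
    have hcub : 1 - p t ≤ 1 := by have := (hp01 t ht).1; linarith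
    have hnum : |(-p'' t * (1 - p t) - -p' t * -p' t)| ≤ L2 * (1 - p t) + L1 ^ 2 := by
      have h1 : |(-p'' t) * (1 - p t)| ≤ L2 * (1 - p t) := by
        rw [abs_mul, abs_neg, abs_of_pos hc]
        exact mul_le_mul_of_nonneg_right (hL2 t ht) (le_of_lt hc)
      have h2 : |(-p' t) * (-p' t)| ≤ L1 ^ 2 := by
        rw [abs_mul, abs_neg]
        calc |p' t| * |p' t| ≤ L1 * L1 :=
              mul_le_mul (hL1 t ht) (hL1 t ht) (abs_nonneg _) hL10
          _ = L1 ^ 2 := by ring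
      calc |(-p'' t * (1 - p t) - -p' t * -p' t)| ≤ _ + _ := abs_sub _ _
        _ ≤ L2 * (1 - p t) + L1 ^ 2 := add_le_add h1 h2
    have : |f'' t| ≤ (L2 * (1 - p t) + L1 ^ 2) / (1 - p t) ^ 2 := by
      rw [hf''def]
      simp only []
      rw [abs_div, abs_of_pos (by positivity : (0:ℝ) < (1 - p t) ^ 2)]
      exact div_le_div_of_nonneg_right hnum (by positivity) |>.trans_eq rfl
    refine this.trans ?_
    rw [hM]
    have hMrw : (L2 + L1 ^ 2 / (1 - pbar)) / (1 - pbar)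
        = (L2 * (1 - pbar) + L1 ^ 2) / (1 - pbar) ^ 2 := by
      rw [div_eq_div_iff (ne_of_gt hb0) (by positivity : ((1:ℝ) - pbar) ^ 2 ≠ 0)]
      field_simp
    rw [hMrw, div_le_div_iff₀ (by positivity) (by positivity)]
    nlinarith [mul_nonneg hL20 (mul_nonneg hb0.le (sub_nonneg.mpr hclb)),
      mul_nonneg hb0.le hc.le, sq_nonneg L1, mul_le_mul_of_nonneg_left hclb hb0.le,
      mul_le_mul hclb hclb hb0.le hc.le]
  -- Taylor bound for each i
  have htaylor : ∀ i, |f (x i) - f xbar - f' xbar * (x i - xbar)| ≤ M / 2 * D ^ 2 := by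
    intro i
    have h1 := quad_taylor_aux hJconv hder1 hder2 hMbound hxbarJ (hx i)
    refine h1.trans ?_
    have hM0 : 0 ≤ M := le_trans (abs_nonneg _) (hMbound xbar hxbarJ)
    have : (x i - xbar) ^ 2 ≤ D ^ 2 := by
      rw [← sq_abs]
      exact pow_le_pow_left₀ (abs_nonneg _) (hD i) 2
    nlinarith
  -- sum cancellation
  have hsumc : ∑ i, (x i - xbar) = 0 := by
    rw [Finset.sum_sub_distrib, Finset.sum_const, Finset.card_univ, Fintype.card_fin, hxbar]
    have hν0 : (ν:ℝ) ≠ 0 := Nat.cast_ne_zero.mpr (by omega)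
    rw [nsmul_eq_mul]
    field_simp
    ring
  set S := ∑ i, f (x i) with hS
  set T := (ν : ℝ) * f xbar with hT
  have hST : |S - T| ≤ ν * M * D ^ 2 / 2 := by
    have : S - T = ∑ i, (f (x i) - f xbar - f' xbar * (x i - xbar)) := by
      rw [Finset.sum_sub_distrib, Finset.sum_sub_distrib, ← Finset.mul_sum, hsumc,
        Finset.sum_const, Finset.card_univ, Fintype.card_fin]
      simp [hS, hT, smul_eq_mul]
    rw [this]
    calc |∑ i, (f (x i) - f xbar - f' xbar * (x i - xbar))|
        ≤ ∑ i : Fin ν, (M / 2 * D ^ 2) :=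
          (Finset.abs_sum_le_sum_abs _ _).trans
            (Finset.sum_le_sum fun i _ => htaylor i)
      _ = ν * M * D ^ 2 / 2 := by
          rw [Finset.sum_const, Finset.card_univ, Fintype.card_fin]; simp; ring
  -- exponential representation
  have hprod : (∏ i, (1 - p (x i))) = Real.exp S := by
    rw [hS, Real.exp_sum]
    exact Finset.prod_congr rfl fun i _ => (Real.exp_log (hq _ (hx i))).symm
  have hpow : (1 - p xbar) ^ ν = Real.exp T := by
    rw [hT, Real.exp_nat_mul, Real.exp_log (hq _ hxbarJ)]
  rw [hprod, hpow]
  have hkey : Real.exp S - Real.exp T = Real.exp T * (Real.exp (S - T) - 1) := by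
    rw [mul_sub, mul_one, ← Real.exp_add]; ring_nf
  rw [hkey, abs_mul, abs_of_pos (Real.exp_pos T)]
  refine mul_le_mul_of_nonneg_left ?_ (le_of_lt (Real.exp_pos T))
  refine (abs_exp_sub_one_le' _).trans ?_
  have := Real.exp_le_exp.mpr hST
  linarith
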